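/- For the building set B(P,n) on [n+1] (n ≥ 3) and t with 2 ≤ t ≤ n−1, let S_t = {1, 2, n+1} ∪ {3,...,t} (with S₂ = {1,2,n+1}). Then S_t ∈ B(P,n), and the restricted building set B(P,n)|_{S_t} is isomorphic, under the bijection of S_t with [t+1] sending 1↦1, 2↦2, i↦i for 3 ≤ i ≤ t, and n+1 ↦ t+1, to the building set B(P,t). -/

import Mathlib

/-!
Membership in `B(P,m)` of a subset of `[m+1]` depends only on its cardinality and on which of
`1`, `2`, `m+1` it contains (`mem_BP_iff`). A bijection of `S_t` onto `[t+1]` fixing `1` and `2`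
and sending `n+1` to `t+1` preserves exactly these data, so it carries `B(P,n)|_{S_t}` onto
`B(P,t)`.
-/

/-- The building set `B(P,m)` on `[m+1]`. -/
def BP (m : ℕ) : Set (Finset ℕ) :=
  {S | ∃ i ∈ Finset.Icc 1 (m + 1), S = {i}} ∪
  {S | ∃ T ⊆ Finset.Icc 3 (m + 1), S = {1, 2} ∪ T} ∪
  {S | ∃ T : Finset ℕ, T ⊆ Finset.Icc 3 m ∧ T.Nonempty ∧ S = {1} ∪ T} ∪
  {Finset.Icc 1 (m + 1)}

open Finset

lemma mem_BP_iff {m : ℕ} (hm : 1 ≤ m) {S : Finset ℕ} :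
    S ∈ BP m ↔ S ⊆ Icc 1 (m + 1) ∧
      (#S = 1 ∨ 1 ∈ S ∧ 2 ∈ S ∨ 1 ∈ S ∧ 2 ∉ S ∧ m + 1 ∉ S) := by
  constructor
  · rintro (((⟨i, hi, rfl⟩ | ⟨T, hT, rfl⟩) | ⟨T, hT, -, rfl⟩) | hS)
    · simpa using hi
    · exact ⟨union_subset (by intro x; simp; omega)
        (hT.trans (Icc_subset_Icc (by omega) le_rfl)), by simp⟩
    · have h2 : 2 ∉ T := fun h => by simpa using hT h
      have htop : m + 1 ∉ T := fun h => by simpa using hT h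
      refine ⟨union_subset (by simp) (hT.trans (Icc_subset_Icc (by omega) (by omega))),
        Or.inr (Or.inr ⟨by simp, by simp [h2], by simp [htop]; omega⟩)⟩
    · rw [Set.mem_singleton_iff.1 hS]; simp; omega
  · rintro ⟨hS, hcard | ⟨h1, h2⟩ | ⟨h1, h2, htop⟩⟩
    · obtain ⟨i, rfl⟩ := card_eq_one.1 hcard
      exact Or.inl (Or.inl (Or.inl ⟨i, singleton_subset_iff.1 hS, rfl⟩))
    · refine Or.inl (Or.inl (Or.inr
        ⟨S \ {1, 2}, fun x hx => ?_, (union_sdiff_of_subset ?_).symm⟩))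
      · have := hS (sdiff_subset hx); simp at hx this ⊢; omega
      · simp [insert_subset_iff, h1, h2]
    · by_cases hS1 : S = {1}
      · exact Or.inl (Or.inl (Or.inl ⟨1, by simp, hS1⟩))
      · refine Or.inl (Or.inr ⟨S \ {1}, fun x hx => ?_, sdiff_nonempty.2 fun h => hS1 ?_,
          (union_sdiff_of_subset (by simpa)).symm⟩)
        · obtain ⟨hxS, hx1⟩ := mem_sdiff.1 hx
          have hx2 : x ≠ 2 := fun h => h2 (h ▸ hxS)
          have hxtop : x ≠ m + 1 := fun h => htop (h ▸ hxS)
          have := hS hxS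
          simp at hx1 this ⊢; omega
        · exact (Finset.Nonempty.subset_singleton_iff ⟨1, h1⟩).1 h

structure IsBPRelabeling (m k : ℕ) (s : Finset ℕ) (f : ℕ → ℕ) : Prop where
  subset : s ⊆ Icc 1 (m + 1)
  injOn : Set.InjOn f s
  image_eq : s.image f = Icc 1 (k + 1)
  one_mem : 1 ∈ s
  two_mem : 2 ∈ s
  top_mem : m + 1 ∈ s
  map_one : f 1 = 1
  map_two : f 2 = 2
  map_top : f (m + 1) = k + 1

namespace IsBPRelabeling

variable {m k : ℕ} {s : Finset ℕ} {f : ℕ → ℕ}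

lemma one_le_left (h : IsBPRelabeling m k s f) : 1 ≤ m := by
  simpa using h.subset h.two_mem

lemma one_le_right (h : IsBPRelabeling m k s f) : 1 ≤ k := by
  have : f 2 ∈ s.image f := mem_image_of_mem f h.two_mem
  rw [h.image_eq, h.map_two] at this
  simpa using this

lemma mem_BP (h : IsBPRelabeling m k s f) : s ∈ BP m :=
  (mem_BP_iff h.one_le_left).2 ⟨h.subset, Or.inr (Or.inl ⟨h.one_mem, h.two_mem⟩)⟩

lemma image_mem_BP_iff (h : IsBPRelabeling m k s f) {T : Finset ℕ} (hT : T ⊆ s) :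
    T.image f ∈ BP k ↔ T ∈ BP m := by
  have hmem : ∀ x ∈ s, f x ∈ T.image f ↔ x ∈ T := fun x hx => by
    rw [← mem_coe, coe_image, h.injOn.mem_image_iff hT hx, mem_coe]
  have hT1 : 1 ∈ T.image f ↔ 1 ∈ T := by simpa [h.map_one] using hmem 1 h.one_mem
  have hT2 : 2 ∈ T.image f ↔ 2 ∈ T := by simpa [h.map_two] using hmem 2 h.two_mem
  have hTtop : k + 1 ∈ T.image f ↔ m + 1 ∈ T := by
    simpa [h.map_top] using hmem (m + 1) h.top_mem
  have hsub : T.image f ⊆ Icc 1 (k + 1) := h.image_eq ▸ image_subset_image hT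
  simp only [mem_BP_iff h.one_le_left, mem_BP_iff h.one_le_right,
    card_image_of_injOn (h.injOn.mono hT), hT1, hT2, hTtop, hsub, hT.trans h.subset, true_and]

lemma image_restrict_BP (h : IsBPRelabeling m k s f) :
    image f '' {T | T ∈ BP m ∧ T ⊆ s} = BP k := by
  ext X
  constructor
  · rintro ⟨T, ⟨hTB, hTs⟩, rfl⟩
    exact (h.image_mem_BP_iff hTs).2 hTB
  · intro hX
    obtain ⟨T, hTs, rfl⟩ :=
      subset_image_iff.1 (h.image_eq ▸ ((mem_BP_iff h.one_le_right).1 hX).1)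
    exact ⟨T, ⟨(h.image_mem_BP_iff hTs).1 hX, hTs⟩, rfl⟩

end IsBPRelabeling

lemma isBPRelabeling_restriction {n t : ℕ} (ht : 2 ≤ t) (htn : t + 1 ≤ n) :
    IsBPRelabeling n t ({1, 2, n + 1} ∪ Icc 3 t) (fun i => if i = n + 1 then t + 1 else i) where
  subset := by
    intro x
    simp only [mem_union, mem_insert, mem_singleton, mem_Icc]
    omega
  injOn := by
    intro a ha b hb hab
    simp only [coe_union, coe_insert, coe_singleton, coe_Icc, Set.mem_union,
      Set.mem_insert_iff, Set.mem_singleton_iff, Set.mem_Icc] at ha hb hab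
    split_ifs at hab <;> omega
  image_eq := by
    ext y
    simp only [mem_image, mem_union, mem_insert, mem_singleton, mem_Icc]
    constructor
    · rintro ⟨x, hx, rfl⟩
      split_ifs <;> omega
    · intro hy
      by_cases hyt : y = t + 1
      · exact ⟨n + 1, by simp, by simp [hyt]⟩
      · exact ⟨y, by omega, by simp; omega⟩
  one_mem := by simp
  two_mem := by simp
  top_mem := by simp
  map_one := by simp; omega
  map_two := by simp; omega
  map_top := by simp

theorem BP_restriction_iso_general (n t : ℕ) (ht : 2 ≤ t) (htn : t ≤ n - 1) :
    let St : Finset ℕ := {1, 2, n + 1} ∪ Finset.Icc 3 t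
    let f : ℕ → ℕ := fun i => if i = n + 1 then t + 1 else i
    St ∈ BP n ∧ Set.InjOn f ↑St ∧
      (Finset.image f) '' {T | T ∈ BP n ∧ T ⊆ St} = BP t := by
  have h := isBPRelabeling_restriction ht (by omega : t + 1 ≤ n)
  exact ⟨h.mem_BP, h.injOn, h.image_restrict_BP⟩

/-- For `2 ≤ t ≤ n-1`, the set `S_t = {1,2,n+1} ∪ {3,…,t}` belongs to `B(P,n)`, and the
restricted building set `B(P,n)|_{S_t}` is carried onto `B(P,t)` by the bijection of
`S_t` with `[t+1]` fixing `1, 2` and `3,…,t` and sending `n+1 ↦ t+1`. -/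
theorem BP_restriction_iso (n t : ℕ) (hn : 3 ≤ n) (ht : 2 ≤ t) (htn : t ≤ n - 1) :
    let St : Finset ℕ := {1, 2, n + 1} ∪ Finset.Icc 3 t
    let f : ℕ → ℕ := fun i => if i = n + 1 then t + 1 else i
    St ∈ BP n ∧ Set.InjOn f ↑St ∧
      (Finset.image f) '' {T | T ∈ BP n ∧ T ⊆ St} = BP t :=
  BP_restriction_iso_general n t ht htn
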